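/- Let P be a finite poset and Q its split. Then the fractional 2-dimension of P is at most the fractional 2-dimension of Q. Consequently, if P has maximum outdegree υ (every element is strictly below at most υ others), then the fractional 2-dimension of P is at most e(υ + 2). -/

import Mathlib

open Classical Finset Real
open scoped Classical

noncomputable section

/-- A monotone partial function from `P` to the `t`-element chain,
encoded as a function into `Option (Fin t)` (`none` = outside the domain). -/
def MonotonePartial {P : Type*} [PartialOrder P] {t : ℕ} (f : P → Option (Fin t)) : Prop :=
  ∀ ⦃x y : P⦄, x ≤ y → ∀ ⦃a b : Fin t⦄, f x = some a → f y = some b → a ≤ b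

/-- `f` separates the pair `(x, y)`: both are in the domain and `f x < f y`. -/
def Separates {P : Type*} {t : ℕ} (f : P → Option (Fin t)) (x y : P) : Prop :=
  ∃ a b : Fin t, f x = some a ∧ f y = some b ∧ a < b

/-- A local `t`-realiser: a set of monotone partial functions into the `t`-chain
separating every pair `x ≱ y`. -/
def IsLocalRealiser {P : Type*} [PartialOrder P] {t : ℕ}
    (L : Finset (P → Option (Fin t))) : Prop :=
  (∀ f ∈ L, MonotonePartial f) ∧ ∀ x y : P, ¬ y ≤ x → ∃ f ∈ L, Separates f x y

/-- The multiplicity of `x` in `L`: the number of members of `L` whose domain contains `x`. -/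
def mult {P : Type*} {t : ℕ} (L : Finset (P → Option (Fin t))) (x : P) : ℕ :=
  (L.filter fun f => (f x).isSome).card

/-- The local `t`-dimension: minimal possible maximum multiplicity of a local `t`-realiser. -/
def ltdim (t : ℕ) (P : Type*) [PartialOrder P] : ℕ :=
  sInf {d | ∃ L : Finset (P → Option (Fin t)), IsLocalRealiser L ∧ ∀ x, mult L x ≤ d}

/-- The fractional `t`-dimension: minimal total weight of a nonnegative weighting of
monotone total functions `P → Fin t` separating every pair `x ≱ y` with weight at least 1. -/
def ftdim (t : ℕ) (P : Type*) [PartialOrder P] [Fintype P] [DecidableEq P] : ℝ :=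
  sInf {s : ℝ | ∃ w : (P → Fin t) → ℝ,
    (∀ f, 0 ≤ w f) ∧ (∀ f, ¬ Monotone f → w f = 0) ∧
    (∀ x y : P, ¬ y ≤ x → 1 ≤ ∑ f : P → Fin t, if f x < f y then w f else 0) ∧
    s = ∑ f : P → Fin t, w f}

/-- The fractional local `t`-dimension: minimal possible maximum (over points `x`) of the
total weight of monotone partial functions whose domain contains `x`, over nonnegative
weightings of monotone partial functions separating every pair `x ≱ y` with weight ≥ 1. -/
def fltdim (t : ℕ) (P : Type*) [PartialOrder P] [Fintype P] [DecidableEq P] : ℝ :=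
  sInf {s : ℝ | ∃ w : (P → Option (Fin t)) → ℝ,
    (∀ f, 0 ≤ w f) ∧ (∀ f, ¬ MonotonePartial f → w f = 0) ∧
    (∀ x y : P, ¬ y ≤ x →
      1 ≤ ∑ f : P → Option (Fin t), if Separates f x y then w f else 0) ∧
    ∀ x : P, (∑ f : P → Option (Fin t), if (f x).isSome then w f else 0) ≤ s}

/-- The split of a poset `P`: minimal copies `inl x = x'` and maximal copies `inr x = x''`,
with `x' ≤ y''` iff `x ≤ y` in `P`. -/
def Split (P : Type*) := P ⊕ P

instance {P : Type*} [DecidableEq P] : DecidableEq (Split P) :=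
  inferInstanceAs (DecidableEq (P ⊕ P))
instance {P : Type*} [Fintype P] : Fintype (Split P) :=
  inferInstanceAs (Fintype (P ⊕ P))
instance {P : Type*} [PartialOrder P] : PartialOrder (Split P) where
  le a b :=
    Sum.elim (fun x => Sum.elim (fun y => x = y) (fun y => x ≤ y) b)
      (fun x => Sum.elim (fun _ => False) (fun y => x = y) b) a
  le_refl a := by cases a <;> simp
  le_trans a b c h1 h2 := by
    cases a <;> cases b <;> cases c <;> simp_all
  le_antisymm a b h1 h2 := by
    cases a <;> cases b <;> simp_all <;> cases h1 <;> rfl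


/-!
Both bounds come from pushing a weighting forward along a map into monotone maps `P → Fin 2`.
For the split, a monotone `f` on `Split P` induces `x ↦ max {f z' : z ≤ x}` on `P`, and
`f x'' < f y'` forces the induced map to separate `x` from `y`. For the outdegree bound, mark
each point independently with probability `p` and take the indicator of the points below no
marked point: it separates `x ≱ y` as soon as `x` is marked and none of the at most `υ + 1`
points above `y` is, which happens with probability at least `p (1 - p) ^ (υ + 1)`.
-/

section FracRealiser

variable {P : Type*} [PartialOrder P] [Fintype P] [DecidableEq P] {t : ℕ}

def IsFracRealiser (t : ℕ) (w : (P → Fin t) → ℝ) : Prop :=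
  (∀ f, 0 ≤ w f) ∧ (∀ f, ¬ Monotone f → w f = 0) ∧
    ∀ x y : P, ¬ y ≤ x → 1 ≤ ∑ f : P → Fin t, if f x < f y then w f else 0

theorem IsFracRealiser.ftdim_le {w : (P → Fin t) → ℝ} (hw : IsFracRealiser t w) :
    ftdim t P ≤ ∑ f, w f :=
  csInf_le ⟨0, by rintro s ⟨w, hw0, -, -, rfl⟩; exact sum_nonneg fun f _ => hw0 f⟩
    ⟨w, hw.1, hw.2.1, hw.2.2, rfl⟩

theorem le_ftdim {c : ℝ} (hne : ∃ w : (P → Fin t) → ℝ, IsFracRealiser t w)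
    (h : ∀ w : (P → Fin t) → ℝ, IsFracRealiser t w → c ≤ ∑ f, w f) : c ≤ ftdim t P := by
  obtain ⟨w, hw⟩ := hne
  refine le_csInf ⟨_, w, hw.1, hw.2.1, hw.2.2, rfl⟩ ?_
  rintro s ⟨w, hw0, hmono, hsep, rfl⟩
  exact h w ⟨hw0, hmono, hsep⟩

end FracRealiser

section Pushforward

variable {α β : Type*} [Fintype α] [Fintype β] [DecidableEq β]

def pushforward (F : α → β) (w : α → ℝ) (b : β) : ℝ :=
  ∑ a, if F a = b then w a else 0

theorem sum_ite_pushforward (F : α → β) (w : α → ℝ) (p : β → Prop) [DecidablePred p] :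
    ∑ b, (if p b then pushforward F w b else 0) = ∑ a, if p (F a) then w a else 0 := by
  calc ∑ b, (if p b then pushforward F w b else 0)
      = ∑ b, ∑ a, if F a = b then (if p (F a) then w a else 0) else 0 := by
        refine sum_congr rfl fun b _ => ?_
        split_ifs with hb
        · exact sum_congr rfl fun a _ => by split_ifs <;> simp_all
        · exact (sum_eq_zero fun a _ => by split_ifs <;> simp_all).symm
    _ = ∑ a, if p (F a) then w a else 0 := by
        rw [sum_comm]
        simp

theorem sum_pushforward (F : α → β) (w : α → ℝ) : ∑ b, pushforward F w b = ∑ a, w a := by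
  simpa using sum_ite_pushforward F w fun _ => True

end Pushforward

theorem isFracRealiser_pushforward {P α : Type*} [PartialOrder P] [Fintype P] [DecidableEq P]
    [Fintype α] {t : ℕ} (F : α → P → Fin t) (hF : ∀ a, Monotone (F a)) {w : α → ℝ}
    (hw0 : ∀ a, 0 ≤ w a)
    (hsep : ∀ x y : P, ¬ y ≤ x → 1 ≤ ∑ a, if F a x < F a y then w a else 0) :
    IsFracRealiser t (pushforward F w) := by
  refine ⟨fun g => sum_nonneg fun a _ => ?_, fun g hg => sum_eq_zero fun a _ => ?_,
    fun x y hxy => ?_⟩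
  · split_ifs <;> simp [hw0]
  · exact if_neg fun h : F a = g => hg (h ▸ hF a)
  · rw [sum_ite_pushforward F w fun g => g x < g y]
    exact hsep x y hxy

section Split

variable {P : Type*} [PartialOrder P] {t : ℕ}

def Split.lower (x : P) : Split P := Sum.inl x

def Split.upper (x : P) : Split P := Sum.inr x

theorem Split.lower_le_upper {x y : P} : Split.lower x ≤ Split.upper y ↔ x ≤ y := Iff.rfl

variable [Fintype P]

def splitLift (f : Split P → Fin (t + 1)) (x : P) : Fin (t + 1) :=
  (univ.filter (· ≤ x)).sup fun z => f (Split.lower z)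

theorem splitLift_monotone (f : Split P → Fin (t + 1)) : Monotone (splitLift f) :=
  fun _ _ hxy => sup_mono fun _ hz =>
    mem_filter.2 ⟨mem_univ _, le_trans (mem_filter.1 hz).2 hxy⟩

theorem splitLift_lt_splitLift {f : Split P → Fin (t + 1)} (hf : Monotone f) {x y : P}
    (h : f (Split.upper x) < f (Split.lower y)) : splitLift f x < splitLift f y :=
  calc splitLift f x ≤ f (Split.upper x) :=
        Finset.sup_le fun _ hz => hf (Split.lower_le_upper.2 (mem_filter.1 hz).2)
    _ < f (Split.lower y) := h
    _ ≤ splitLift f y :=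
        le_sup (f := fun z => f (Split.lower z)) (mem_filter.2 ⟨mem_univ y, le_rfl⟩)

theorem IsFracRealiser.splitLift [DecidableEq P] {w : (Split P → Fin (t + 1)) → ℝ}
    (hw : IsFracRealiser (t + 1) w) : IsFracRealiser (t + 1) (pushforward splitLift w) := by
  refine isFracRealiser_pushforward _ splitLift_monotone hw.1 fun x y hxy =>
    (hw.2.2 (Split.upper x) (Split.lower y) hxy).trans (sum_le_sum fun f _ => ?_)
  by_cases hf : Monotone f
  · split_ifs with h h'
    · exact le_rfl
    · exact absurd (splitLift_lt_splitLift hf h) h'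
    · exact hw.1 f
    · exact le_rfl
  · simp [hw.2.1 f hf]

theorem ftdim_le_ftdim_split [DecidableEq P]
    (hne : ∃ w : (Split P → Fin (t + 1)) → ℝ, IsFracRealiser (t + 1) w) :
    ftdim (t + 1) P ≤ ftdim (t + 1) (Split P) :=
  le_ftdim hne fun w hw => (sum_pushforward splitLift w) ▸ hw.splitLift.ftdim_le

end Split

section Outdegree

variable {Q : Type*}

/-- `σ` marks the points `z` with `σ z = 1`. -/
def belowNoMarked [LE Q] (σ : Q → Fin 2) (z : Q) : Fin 2 :=
  if ∀ s, z ≤ s → σ s = 0 then 1 else 0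

theorem belowNoMarked_monotone [Preorder Q] (σ : Q → Fin 2) : Monotone (belowNoMarked σ) := by
  intro z z' hzz'
  unfold belowNoMarked
  split_ifs with h h'
  · exact le_rfl
  · exact absurd (fun s hs => h s (hzz'.trans hs)) h'
  · exact Fin.zero_le _
  · exact le_rfl

theorem belowNoMarked_lt [Preorder Q] {σ : Q → Fin 2} {x y : Q} (hx : σ x = 1)
    (hy : ∀ s, y ≤ s → σ s = 0) : belowNoMarked σ x < belowNoMarked σ y := by
  have hx' : ¬ ∀ s, x ≤ s → σ s = 0 := fun h => by simpa [hx] using h x le_rfl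
  rw [belowNoMarked, belowNoMarked, if_neg hx', if_pos hy]
  decide

/-- The probability of `σ` when each point is marked independently with probability `p`. -/
def bernoulliWeight [Fintype Q] (p : ℝ) (σ : Q → Fin 2) : ℝ :=
  ∏ z, ![1 - p, p] (σ z)

theorem bernoulliWeight_nonneg [Fintype Q] {p : ℝ} (hp0 : 0 ≤ p) (hp1 : p ≤ 1)
    (σ : Q → Fin 2) : 0 ≤ bernoulliWeight p σ :=
  prod_nonneg fun z _ => by
    have : ∀ j : Fin 2, 0 ≤ ![1 - p, p] j := by simp [Fin.forall_fin_two, hp0, hp1]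
    exact this (σ z)

theorem sum_bernoulliWeight [Fintype Q] [DecidableEq Q] (p : ℝ) :
    ∑ σ, bernoulliWeight (Q := Q) p σ = 1 := by
  simp [bernoulliWeight, ← Fintype.prod_sum, Fin.sum_univ_two]

theorem mul_pow_le_sum_bernoulliWeight [PartialOrder Q] [Fintype Q] [DecidableEq Q] {p : ℝ}
    (hp0 : 0 ≤ p) (hp1 : p ≤ 1) {x y : Q} (hxy : ¬ y ≤ x) :
    p * (1 - p) ^ #{z | y ≤ z} ≤
      ∑ σ, if belowNoMarked σ x < belowNoMarked σ y then bernoulliWeight p σ else 0 := by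
  -- `σ ∈ piFinset A` is the event that `x` is marked and no point above `y` is.
  let A : Q → Finset (Fin 2) := fun z => if z = x then {1} else if y ≤ z then {0} else univ
  have hA : ∀ z, ∑ j ∈ A z, ![1 - p, p] j =
      (if z = x then p else 1) * (if y ≤ z then 1 - p else 1) := by
    intro z
    by_cases hz : z = x
    · subst hz; simp [A, hxy]
    · by_cases hyz : y ≤ z <;> simp [A, hz, hyz, Fin.sum_univ_two]
  calc p * (1 - p) ^ #{z | y ≤ z} = ∏ z, ∑ j ∈ A z, ![1 - p, p] j := by
        simp_rw [hA, prod_mul_distrib, prod_ite_eq', prod_ite, prod_const_one, prod_const]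
        simp
    _ = ∑ σ ∈ Fintype.piFinset A, bernoulliWeight p σ := prod_univ_sum A _
    _ ≤ _ := by
        rw [← sum_filter]
        refine sum_le_sum_of_subset_of_nonneg (fun σ hσ => ?_) fun σ _ _ =>
          bernoulliWeight_nonneg hp0 hp1 σ
        rw [Fintype.mem_piFinset] at hσ
        refine mem_filter.2 ⟨mem_univ σ, belowNoMarked_lt (by simpa [A] using hσ x) fun s hs => ?_⟩
        have hsx : s ≠ x := fun h => hxy (h ▸ hs)
        simpa [A, hsx, hs] using hσ s

theorem exists_isFracRealiser_of_outdegree [PartialOrder Q] [Fintype Q] [DecidableEq Q] {υ : ℕ}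
    (hdeg : ∀ x : Q, #{y | x < y} ≤ υ) {p : ℝ} (hp0 : 0 < p) (hp1 : p < 1) :
    ∃ w : (Q → Fin 2) → ℝ, IsFracRealiser 2 w ∧ ∑ f, w f = (p * (1 - p) ^ (υ + 1))⁻¹ := by
  set T := (p * (1 - p) ^ (υ + 1))⁻¹
  have hq0 : 0 < 1 - p := by linarith
  have hT0 : 0 < T := by positivity
  refine ⟨pushforward belowNoMarked fun σ => T * bernoulliWeight p σ,
    isFracRealiser_pushforward _ belowNoMarked_monotone
      (fun σ => mul_nonneg hT0.le (bernoulliWeight_nonneg hp0.le hp1.le σ)) fun x y hxy => ?_, ?_⟩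
  · have hup : #{z | y ≤ z} ≤ υ + 1 :=
      calc #{z | y ≤ z} ≤ #(insert y ({z | y < z} : Finset Q)) := card_le_card fun z hz => by
            simpa [eq_comm, le_iff_eq_or_lt] using hz
        _ ≤ υ + 1 := (card_insert_le _ _).trans (by have := hdeg y; omega)
    calc 1 = T * (p * (1 - p) ^ (υ + 1)) := (inv_mul_cancel₀ (by positivity)).symm
      _ ≤ T * (p * (1 - p) ^ #{z | y ≤ z}) := by
          gcongr T * (p * ?_)
          exact pow_le_pow_of_le_one hq0.le (by linarith) hup
      _ ≤ T * ∑ σ, if belowNoMarked σ x < belowNoMarked σ y then bernoulliWeight p σ else 0 := by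
          gcongr
          exact mul_pow_le_sum_bernoulliWeight hp0.le hp1.le hxy
      _ = _ := by simp_rw [mul_sum, mul_ite, mul_zero]
  · rw [sum_pushforward, ← mul_sum, sum_bernoulliWeight, mul_one]

theorem inv_mul_one_sub_pow_le_exp_mul (υ : ℕ) :
    (((υ : ℝ) + 2)⁻¹ * (1 - ((υ : ℝ) + 2)⁻¹) ^ (υ + 1))⁻¹ ≤ exp 1 * ((υ : ℝ) + 2) := by
  have h : (((υ : ℝ) + 2)⁻¹ * (1 - ((υ : ℝ) + 2)⁻¹) ^ (υ + 1))⁻¹ =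
      ((υ : ℝ) + 2) * (1 + (((υ + 1 : ℕ) : ℝ))⁻¹) ^ (υ + 1) := by
    have hsub : 1 - ((υ : ℝ) + 2)⁻¹ = ((υ : ℝ) + 1) / ((υ : ℝ) + 2) := by field_simp; ring
    have hadd : 1 + (((υ + 1 : ℕ) : ℝ))⁻¹ = ((υ : ℝ) + 2) / ((υ : ℝ) + 1) := by
      push_cast; field_simp; ring
    rw [hsub, hadd, mul_inv, inv_inv, ← inv_pow, inv_div]
  rw [h, mul_comm]
  gcongr
  exact one_add_inv_pow_le_exp

theorem ftdim_two_le_exp_mul_of_outdegree [PartialOrder Q] [Fintype Q] [DecidableEq Q] {υ : ℕ}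
    (hdeg : ∀ x : Q, #{y | x < y} ≤ υ) : ftdim 2 Q ≤ exp 1 * ((υ : ℝ) + 2) := by
  -- `p = 1 / (υ + 2)` maximises `p (1 - p) ^ (υ + 1)`.
  obtain ⟨w, hw, hsum⟩ := exists_isFracRealiser_of_outdegree hdeg (p := ((υ : ℝ) + 2)⁻¹)
    (by positivity) (inv_lt_one_of_one_lt₀ (by linarith))
  exact hw.ftdim_le.trans (hsum ▸ inv_mul_one_sub_pow_le_exp_mul υ)

end Outdegree

/-- `ftdim₂ P ≤ ftdim₂ (Split P)`, and if every element of `P` is strictly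
below at most `υ` others (maximum outdegree `υ`), then `ftdim₂ P ≤ e(υ + 2)`. -/
theorem ftdim_split_and_outdegree (P : Type*) [PartialOrder P] [Fintype P] [DecidableEq P]
    (υ : ℕ) (hdeg : ∀ x : P, ((Finset.univ : Finset P).filter (fun y => x < y)).card ≤ υ) :
    ftdim 2 P ≤ ftdim 2 (Split P) ∧ ftdim 2 P ≤ Real.exp 1 * ((υ : ℝ) + 2) := by
  obtain ⟨w, hw, -⟩ := exists_isFracRealiser_of_outdegree (Q := Split P)
    (fun _ => (card_filter_le _ _).trans_eq card_univ) one_half_pos one_half_lt_one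
  exact ⟨ftdim_le_ftdim_split ⟨w, hw⟩, ftdim_two_le_exp_mul_of_outdegree hdeg⟩
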